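/- For any integers m ≥ 0 and a rational (or real) number x, the polynomial identity ∑_{i=0}^m C(m,i) C(x,i) t^i = ∑_{i=0}^m C(m,i) C(x+i, m) (t−1)^{m−i} holds in Q(x)[t] (Gould's identity (3.17)). -/

import Mathlib

open Polynomial

/-- Generalized binomial coefficient `C(x,k) = x(x-1)⋯(x-k+1)/k!` for rational `x`. -/
noncomputable def gchoose (x : ℚ) (k : ℕ) : ℚ :=
  (∏ j ∈ Finset.range k, (x - j)) / (k.factorial : ℚ)

lemma descPoch_smeval (x : ℚ) (k : ℕ) :
    (descPochhammer ℤ k).smeval x = ∏ j ∈ Finset.range k, (x - j) := by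
  induction k with
  | zero => simp [descPochhammer_zero, Polynomial.smeval_one]
  | succ n ih =>
    rw [descPochhammer_succ_right, Polynomial.smeval_mul, ih, Finset.prod_range_succ]
    congr 1
    simp [Polynomial.smeval_sub, Polynomial.smeval_X, Polynomial.smeval_natCast]

lemma gchoose_eq (x : ℚ) (k : ℕ) : gchoose x k = Ring.choose x k := by
  have h := Ring.descPochhammer_eq_factorial_smul_choose x k
  rw [descPoch_smeval] at h
  have hk : (k.factorial : ℚ) ≠ 0 := by positivity
  rw [gchoose, h, nsmul_eq_mul, mul_div_cancel_left₀ _ hk]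

lemma gchoose_vandermonde (x : ℚ) (n m : ℕ) :
    gchoose (x + n) m = ∑ i ∈ Finset.range (m + 1), gchoose x i * ((n.choose (m - i) : ℚ)) := by
  rw [gchoose_eq, Ring.add_choose_eq m (Commute.all _ _),
    Finset.Nat.sum_antidiagonal_eq_sum_range_succ_mk]
  refine Finset.sum_congr rfl fun i _ => ?_
  rw [gchoose_eq, Ring.choose_natCast]

lemma key (m k : ℕ) (hk : k ≤ m) (x : ℚ) :
    ∑ i ∈ Finset.range (m + 1), (m.choose i : ℚ) * gchoose x i * (i.choose k : ℚ) =
      (m.choose k : ℚ) * gchoose (x + (m - k : ℕ)) m := by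
  rw [gchoose_vandermonde, Finset.mul_sum]
  refine Finset.sum_congr rfl fun i hi => ?_
  rw [Finset.mem_range] at hi
  have him : i ≤ m := by omega
  have hnat : m.choose i * i.choose k = m.choose k * ((m - k).choose (m - i)) := by
    rcases le_or_gt k i with h | h
    · rw [Nat.choose_mul h]
      congr 1
      have h1 : m - i ≤ m - k := by omega
      have h2 : (m - k) - (m - i) = i - k := by omega
      rw [← Nat.choose_symm h1, h2]
    · rw [Nat.choose_eq_zero_of_lt h, Nat.choose_eq_zero_of_lt (by omega : m - k < m - i)]
      ring
  have := congrArg (fun t : ℕ => (t : ℚ)) hnat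
  push_cast at this
  calc (m.choose i : ℚ) * gchoose x i * (i.choose k : ℚ)
      = ((m.choose i : ℚ) * (i.choose k : ℚ)) * gchoose x i := by ring
    _ = ((m.choose k : ℚ) * ((m - k).choose (m - i) : ℚ)) * gchoose x i := by rw [this]
    _ = (m.choose k : ℚ) * (gchoose x i * ((m - k).choose (m - i) : ℚ)) := by ring

/-- Gould's identity (3.17): for any `m ≥ 0` and any rational `x`,
`∑_{i=0}^m C(m,i) C(x,i) t^i = ∑_{i=0}^m C(m,i) C(x+i,m) (t-1)^{m-i}` in `ℚ[t]`. -/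
theorem stmt6 (m : ℕ) (x : ℚ) :
    ∑ i ∈ Finset.range (m + 1), C ((m.choose i : ℚ) * gchoose x i) * X ^ i =
      ∑ i ∈ Finset.range (m + 1),
        C ((m.choose i : ℚ) * gchoose (x + i) m) * (X - 1) ^ (m - i) := by
  have hX : ∀ i, i ≤ m → (X : ℚ[X]) ^ i =
      ∑ k ∈ Finset.range (m + 1), C (i.choose k : ℚ) * (X - 1) ^ k := by
    intro i hi
    conv_lhs => rw [show (X : ℚ[X]) = (X - 1) + 1 by ring, add_pow]
    simp only [one_pow, mul_one]
    have hsub : ∑ k ∈ Finset.range (i + 1), (X - 1 : ℚ[X]) ^ k * (i.choose k : ℚ[X]) =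
        ∑ k ∈ Finset.range (m + 1), (X - 1 : ℚ[X]) ^ k * (i.choose k : ℚ[X]) :=
      Finset.sum_subset (Finset.range_subset_range.mpr (by omega))
        (fun k _ hk => by
          rw [Finset.mem_range, not_lt] at hk
          rw [Nat.choose_eq_zero_of_lt (show i < k by omega), Nat.cast_zero, mul_zero])
    rw [hsub]
    refine Finset.sum_congr rfl fun k _ => ?_
    rw [C_eq_natCast, mul_comm]
  calc
    ∑ i ∈ Finset.range (m + 1), C ((m.choose i : ℚ) * gchoose x i) * X ^ i
      = ∑ i ∈ Finset.range (m + 1), ∑ k ∈ Finset.range (m + 1),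
          C ((m.choose i : ℚ) * gchoose x i * (i.choose k : ℚ)) * (X - 1) ^ k := by
        refine Finset.sum_congr rfl fun i hi => ?_
        rw [Finset.mem_range] at hi
        rw [hX i (by omega), Finset.mul_sum]
        refine Finset.sum_congr rfl fun k _ => ?_
        rw [← mul_assoc, ← C_mul]
    _ = ∑ k ∈ Finset.range (m + 1),
          C (∑ i ∈ Finset.range (m + 1),
            (m.choose i : ℚ) * gchoose x i * (i.choose k : ℚ)) * (X - 1) ^ k := by
        rw [Finset.sum_comm]
        refine Finset.sum_congr rfl fun k _ => ?_
        rw [map_sum, Finset.sum_mul]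
    _ = ∑ k ∈ Finset.range (m + 1),
          C ((m.choose k : ℚ) * gchoose (x + (m - k : ℕ)) m) * (X - 1) ^ k := by
        refine Finset.sum_congr rfl fun k hk => ?_
        rw [Finset.mem_range] at hk
        rw [key m k (by omega) x]
    _ = ∑ i ∈ Finset.range (m + 1),
          C ((m.choose i : ℚ) * gchoose (x + i) m) * (X - 1) ^ (m - i) := by
        rw [← Finset.sum_range_reflect]
        refine Finset.sum_congr rfl fun k hk => ?_
        rw [Finset.mem_range] at hk
        have h1 : m + 1 - 1 - k = m - k := by omega
        rw [h1, Nat.choose_symm (by omega : k ≤ m),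
          (by omega : m - (m - k) = k)]
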